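/- arXiv:2605.25223 — 10 statements merged into one kernel-verified Lean document; each statement's English description precedes it below -/
import Mathlib

section
/- Every nonempty, closed and discrete solution Λ ⊆ ℂ of the self-similarity equation Λ = ⋃_{k=1}^m g_k(Λ) contains a point lying on a cycle of the IFS; that is, there exist x ∈ Λ, n ≥ 1 and indices j₁, …, j_n ∈ {1, …, m} with g_{j_n} ∘ ⋯ ∘ g_{j_1}(x) = x. -/
/-- A point `x` lies on a cycle of the IFS `g_k(x) = β x + z_k` if some nonempty
composition of the maps `g_k` fixes `x`. -/
def OnCycle (m : ℕ) (β : ℂ) (z : Fin m → ℂ) (x : ℂ) : Prop :=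
  ∃ l : List (Fin m), l ≠ [] ∧ l.foldl (fun w k => β * w + z k) x = x

/-- Every nonempty, closed and discrete solution `Λ` of `Λ = ⋃ₖ g_k(Λ)` for the
expanding IFS `g_k(x) = β x + z_k` with `|β| > 1` contains a point on a cycle of the IFS. -/
theorem stmt_3 (m : ℕ) (hm : 0 < m) (β : ℂ) (hβ : 1 < ‖β‖)
    (z : Fin m → ℂ) (Λ : Set ℂ) (hne : Λ.Nonempty) (hcl : IsClosed Λ)
    (hdisc : ∀ B : Set ℂ, Bornology.IsBounded B → (Λ ∩ B).Finite)
    (hsol : Λ = ⋃ k : Fin m, (fun x => β * x + z k) '' Λ) :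
    ∃ x ∈ Λ, OnCycle m β z x := by
  obtain ⟨x0, hx0⟩ := hne
  -- every point of Λ has a preimage in Λ under some g_k
  have hpre : ∀ x, x ∈ Λ → ∃ y, ∃ _ : y ∈ Λ, ∃ k : Fin m, β * y + z k = x := by
    intro x hx
    rw [hsol] at hx
    simp only [Set.mem_iUnion, Set.mem_image] at hx
    obtain ⟨k, y, hy, hk⟩ := hx
    exact ⟨y, hy, k, hk⟩
  choose Y hY K hK using hpre
  -- backward orbit
  set s : ℕ → {x : ℂ // x ∈ Λ} :=
    fun n => Nat.rec ⟨x0, hx0⟩ (fun _ p => ⟨Y p.1 p.2, hY p.1 p.2⟩) n with hs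
  have hstep : ∀ n, β * (s (n + 1)).1 + z (K (s n).1 (s n).2) = (s n).1 :=
    fun n => hK _ _
  -- bound the backward orbit
  set Z : ℝ := ∑ k, ‖z k‖ with hZ
  have hZk : ∀ k, ‖z k‖ ≤ Z :=
    fun k => Finset.single_le_sum (f := fun k => ‖z k‖)
      (fun i _ => norm_nonneg _) (Finset.mem_univ k)
  have hZ0 : 0 ≤ Z := Finset.sum_nonneg fun i _ => norm_nonneg _
  have hβ0 : (0 : ℝ) < ‖β‖ := lt_trans one_pos hβ
  have hβ1 : (0 : ℝ) < ‖β‖ - 1 := by linarith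
  set R : ℝ := max (‖x0‖) (Z / (‖β‖ - 1)) with hR
  have hR0 : 0 ≤ R := le_trans (norm_nonneg _) (le_max_left _ _)
  have hZR : Z ≤ (‖β‖ - 1) * R := by
    have h1 : Z / (‖β‖ - 1) ≤ R := le_max_right _ _
    have := mul_le_mul_of_nonneg_left h1 hβ1.le
    calc Z = (‖β‖ - 1) * (Z / (‖β‖ - 1)) := by field_simp
    _ ≤ (‖β‖ - 1) * R := this
  have hbound : ∀ n, ‖(s n).1‖ ≤ R := by
    intro n
    induction n with
    | zero => exact le_max_left _ _
    | succ n ih =>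
      have h := hstep n
      have he : β * (s (n + 1)).1 = (s n).1 - z (K (s n).1 (s n).2) := by
        linear_combination h
      have h2 : ‖β‖ * ‖(s (n + 1)).1‖ ≤ R + Z := by
        rw [← norm_mul, he]
        calc ‖(s n).1 - z (K (s n).1 (s n).2)‖
            ≤ ‖(s n).1‖ + ‖z (K (s n).1 (s n).2)‖ := by
              simpa using norm_sub_le (s n).1 (z (K (s n).1 (s n).2))
        _ ≤ R + Z := add_le_add ih (hZk _)
      have h3 : ‖β‖ * ‖(s (n + 1)).1‖ ≤ ‖β‖ * R := by
        nlinarith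
      exact le_of_mul_le_mul_left h3 hβ0
  -- the backward orbit lies in a finite set
  have hfin : (Λ ∩ Metric.closedBall 0 R).Finite := hdisc _ Metric.isBounded_closedBall
  have hmem : ∀ n, (s n).1 ∈ Λ ∩ Metric.closedBall 0 R := by
    intro n
    refine ⟨(s n).2, ?_⟩
    simpa [Metric.mem_closedBall, Complex.dist_eq] using hbound n
  haveI : Finite ↥(Λ ∩ Metric.closedBall 0 R) := hfin.to_subtype
  obtain ⟨i, j, hij, hsij⟩ := Finite.exists_ne_map_eq_of_infinite
    (fun n : ℕ => (⟨(s n).1, hmem n⟩ : ↥(Λ ∩ Metric.closedBall 0 R)))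
  have heq : (s i).1 = (s j).1 := Subtype.mk_eq_mk.mp hsij
  -- chains: composing d forward maps brings s (i+d) back to s i
  have hchain : ∀ d i, ∃ l : List (Fin m), l.length = d ∧
      List.foldl (fun w k => β * w + z k) (s (i + d)).1 l = (s i).1 := by
    intro d
    induction d with
    | zero => intro i; exact ⟨[], rfl, rfl⟩
    | succ d ih =>
      intro i
      obtain ⟨l, hl, hfold⟩ := ih (i + 1)
      refine ⟨l ++ [K (s i).1 (s i).2], by simp [hl], ?_⟩
      rw [List.foldl_append]
      have he : i + (d + 1) = i + 1 + d := by omega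
      rw [he, hfold]
      simpa using hstep i
  have key : ∀ a b : ℕ, a < b → (s a).1 = (s b).1 → ∃ x ∈ Λ, OnCycle m β z x := by
    intro a b hab hseq
    obtain ⟨l, hl, hfold⟩ := hchain (b - a) a
    have hab' : a + (b - a) = b := by omega
    rw [hab'] at hfold
    refine ⟨(s b).1, (s b).2, l, ?_, hfold.trans hseq⟩
    intro hnil
    rw [hnil] at hl
    simp at hl
    omega
  rcases hij.lt_or_gt with h | h
  · exact key i j h heq
  · exact key j i h heq.symm
end

section
/- Let Λ ⊆ ℂ be a nonempty, closed and discrete solution of the self-similarity equation Λ = ⋃_{k=1}^m g_k(Λ). Then every point of Λ is obtained from a cycle point by repeated application of the maps g_k: for every z ∈ Λ there exist p ≥ 0 and indices k₁, …, k_p ∈ {1, …, m} such that, setting z₀ = z and z_i = (z_{i−1} − z_{k_i})/β for i = 1, …, p, every z_i belongs to Λ and z_p lies on a cycle of the IFS. -/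
/-- In a nonempty, closed and discrete solution `Λ` of `Λ = ⋃ₖ g_k(Λ)`, every point is
obtained from a cycle point by repeated application of the maps `g_k`: following a
suitable chain of inverse maps within `Λ` leads from the point to a cycle point. -/
theorem stmt_4 (m : ℕ) (hm : 0 < m) (β : ℂ) (hβ : 1 < ‖β‖)
    (z : Fin m → ℂ) (Λ : Set ℂ) (hne : Λ.Nonempty) (hcl : IsClosed Λ)
    (hdisc : ∀ B : Set ℂ, Bornology.IsBounded B → (Λ ∩ B).Finite)
    (hsol : Λ = ⋃ k : Fin m, (fun x => β * x + z k) '' Λ)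
    (x : ℂ) (hx : x ∈ Λ) :
    ∃ (p : ℕ) (ks : Fin p → Fin m) (w : ℕ → ℂ),
      w 0 = x ∧
      (∀ i : Fin p, w (i + 1) = (w i - z (ks i)) / β) ∧
      (∀ i ≤ p, w i ∈ Λ) ∧
      OnCycle m β z (w p) := by
  classical
  have hβabs : (0:ℝ) < ‖β‖ := by linarith
  have hβ0 : β ≠ 0 := by
    intro h
    rw [h] at hβ
    simp at hβ
    linarith
  have key : ∀ y : ℂ, ∃ kw : Fin m × ℂ, y ∈ Λ → kw.2 ∈ Λ ∧ y = β * kw.2 + z kw.1 := by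
    intro y
    by_cases hy : y ∈ Λ
    · have hy' : y ∈ ⋃ k : Fin m, (fun x => β * x + z k) '' Λ := by rw [← hsol]; exact hy
      simp only [Set.mem_iUnion, Set.mem_image] at hy'
      obtain ⟨kk, u, hu, he⟩ := hy'
      exact ⟨(kk, u), fun _ => ⟨hu, he.symm⟩⟩
    · exact ⟨(⟨0, hm⟩, 0), fun h => absurd h hy⟩
  choose F hF using key
  let w : ℕ → ℂ := fun n => Nat.rec x (fun _ ih => (F ih).2) n
  let k : ℕ → Fin m := fun n => (F (w n)).1
  have hw0 : w 0 = x := rfl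
  have hmem : ∀ n, w n ∈ Λ := by
    intro n
    induction n with
    | zero => exact hx
    | succ n ih => exact (hF (w n) ih).1
  have hrec : ∀ n, w n = β * w (n + 1) + z (k n) := fun n => (hF (w n) (hmem n)).2
  have hstep : ∀ n, w (n + 1) = (w n - z (k n)) / β := by
    intro n
    rw [eq_div_iff hβ0]
    linear_combination -(hrec n)
  -- boundedness
  have hmne : (Finset.univ : Finset (Fin m)).Nonempty := ⟨⟨0, hm⟩, Finset.mem_univ _⟩
  set C : ℝ := Finset.univ.sup' hmne (fun kk => ‖z kk‖) with hC
  have hC0 : ∀ kk, ‖z kk‖ ≤ C := by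
    intro kk
    rw [hC]
    exact Finset.le_sup' (fun kk => ‖z kk‖) (Finset.mem_univ kk)
  have hCnn : 0 ≤ C := le_trans (norm_nonneg _) (hC0 ⟨0, hm⟩)
  set M : ℝ := max (‖x‖) (C / (‖β‖ - 1)) with hM
  have hβ1 : (0:ℝ) < ‖β‖ - 1 := by linarith
  have hMC : C ≤ M * (‖β‖ - 1) := by
    have : C / (‖β‖ - 1) ≤ M := le_max_right _ _
    calc C = C / (‖β‖ - 1) * (‖β‖ - 1) := by field_simp
    _ ≤ M * (‖β‖ - 1) := by
        apply mul_le_mul_of_nonneg_right this (le_of_lt hβ1)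
  have hbound : ∀ n, ‖w n‖ ≤ M := by
    intro n
    induction n with
    | zero => exact le_max_left _ _
    | succ n ih =>
      rw [hstep n, norm_div, div_le_iff₀ hβabs]
      calc ‖w n - z (k n)‖ ≤ ‖w n‖ + ‖z (k n)‖ := by
            exact norm_sub_le (w n) (z (k n))
      _ ≤ M + C := add_le_add ih (hC0 _)
      _ ≤ M * ‖β‖ := by nlinarith
  -- finiteness and a repetition
  have hSfin : (Λ ∩ Metric.closedBall 0 M).Finite :=
    hdisc _ Metric.isBounded_closedBall
  have hmemS : ∀ n, w n ∈ Λ ∩ Metric.closedBall 0 M := by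
    intro n
    refine ⟨hmem n, ?_⟩
    rw [Metric.mem_closedBall, dist_zero_right]
    exact hbound n
  have : ∃ a b : ℕ, a ≠ b ∧ w a = w b := by
    haveI : Finite ↥(Λ ∩ Metric.closedBall 0 M) := hSfin
    obtain ⟨a, b, hab, he⟩ := Finite.exists_ne_map_eq_of_infinite
      (fun n : ℕ => (⟨w n, hmemS n⟩ : ↥(Λ ∩ Metric.closedBall 0 M)))
    exact ⟨a, b, hab, congrArg Subtype.val he⟩
  obtain ⟨a, b, hab, he⟩ := this
  obtain ⟨i, j, hij, hwij⟩ : ∃ i j : ℕ, i < j ∧ w i = w j := by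
    rcases lt_or_gt_of_ne hab with h | h
    · exact ⟨a, b, h, he⟩
    · exact ⟨b, a, h, he.symm⟩
  -- fold lemma
  have hfold : ∀ t, t ≤ j →
      List.foldl (fun u kk => β * u + z kk) (w j)
        ((List.range t).map (fun s => k (j - 1 - s))) = w (j - t) := by
    intro t
    induction t with
    | zero => intro _; simp
    | succ t ih =>
      intro ht
      have ht' : t ≤ j := Nat.le_of_succ_le ht
      rw [List.range_succ, List.map_append, List.foldl_append, ih ht']
      simp only [List.map_cons, List.map_nil, List.foldl_cons, List.foldl_nil]
      have h1 : j - 1 - t + 1 = j - t := by omega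
      have h2 : j - (t + 1) = j - 1 - t := by omega
      rw [h2, hrec (j - 1 - t), h1]
  refine ⟨j, fun i => k i, w, hw0, fun i => hstep i, fun i _ => hmem i, ?_⟩
  refine ⟨(List.range (j - i)).map (fun s => k (j - 1 - s)), ?_, ?_⟩
  · simp only [ne_eq, List.map_eq_nil_iff, List.range_eq_nil]
    omega
  · rw [hfold (j - i) (Nat.sub_le _ _)]
    rw [Nat.sub_sub_self (le_of_lt hij)]
    exact hwij
end

section
/- Let L ⊆ ℂ be closed and discrete. Then the collection of all sets Λ ⊆ L satisfying the self-similarity equation Λ = ⋃_{k=1}^m g_k(Λ) is finite, and the union of all such sets is itself a solution of the self-similarity equation contained in L; it is the unique maximal solution within L. -/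
open Set

/-- For a closed and discrete set `L ⊆ ℂ`, the collection of solutions `Λ ⊆ L` of the
self-similarity equation `Λ = ⋃ₖ g_k(Λ)` is finite, their union is itself a solution
contained in `L`, and it contains every solution (so it is the unique maximal one). -/
theorem stmt_5 (m : ℕ) (hm : 0 < m) (β : ℂ) (hβ : 1 < ‖β‖)
    (z : Fin m → ℂ) (L : Set ℂ) (hcl : IsClosed L)
    (hdisc : ∀ B : Set ℂ, Bornology.IsBounded B → (L ∩ B).Finite) :
    {Λ : Set ℂ | Λ ⊆ L ∧ Λ = ⋃ k : Fin m, (fun x => β * x + z k) '' Λ}.Finite ∧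
    (⋃₀ {Λ : Set ℂ | Λ ⊆ L ∧ Λ = ⋃ k : Fin m, (fun x => β * x + z k) '' Λ}) ⊆ L ∧
    (⋃₀ {Λ : Set ℂ | Λ ⊆ L ∧ Λ = ⋃ k : Fin m, (fun x => β * x + z k) '' Λ}) =
      ⋃ k : Fin m, (fun x => β * x + z k) ''
        (⋃₀ {Λ : Set ℂ | Λ ⊆ L ∧ Λ = ⋃ k : Fin m, (fun x => β * x + z k) '' Λ}) ∧
    ∀ Λ : Set ℂ, Λ ⊆ L → Λ = (⋃ k : Fin m, (fun x => β * x + z k) '' Λ) →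
      Λ ⊆ ⋃₀ {Λ : Set ℂ | Λ ⊆ L ∧ Λ = ⋃ k : Fin m, (fun x => β * x + z k) '' Λ} := by
  classical
  have hβ0 : (0:ℝ) < ‖β‖ := lt_trans one_pos hβ
  -- a common bound on the translation parts
  obtain ⟨Z, hZ0, hZ⟩ : ∃ Z : ℝ, 0 ≤ Z ∧ ∀ k, ‖z k‖ ≤ Z :=
    ⟨∑ k, ‖z k‖,
      Finset.sum_nonneg fun _ _ => norm_nonneg _,
      fun k => Finset.single_le_sum (f := fun k => ‖z k‖)
        (fun _ _ => norm_nonneg _) (Finset.mem_univ k)⟩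
  set R : ℝ := Z / (‖β‖ - 1) with hRdef
  have hR0 : 0 ≤ R := div_nonneg hZ0 (by linarith)
  have hRZ : Z ≤ (‖β‖ - 1) * R := by
    rw [hRdef, mul_div_cancel₀ _ (by linarith : ‖β‖ - 1 ≠ 0)]
  set F : Set ℂ := L ∩ Metric.closedBall 0 (R + 1) with hFdef
  have hF : F.Finite := hdisc _ Metric.isBounded_closedBall
  set Rel : ℂ → ℂ → Prop := fun a b => ∃ k : Fin m, b = β * a + z k with hRel
  set S := {Λ : Set ℂ | Λ ⊆ L ∧ Λ = ⋃ k : Fin m, (fun x => β * x + z k) '' Λ} with hS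
  -- forward invariance along chains
  have hfwd : ∀ Λ : Set ℂ, Λ = (⋃ k : Fin m, (fun x => β * x + z k) '' Λ) →
      ∀ y x : ℂ, Relation.ReflTransGen Rel y x → y ∈ Λ → x ∈ Λ := by
    intro Λ heq y x h hy
    induction h with
    | refl => exact hy
    | tail h hrel ih =>
      obtain ⟨k, rfl⟩ := hrel
      rw [heq]
      exact mem_iUnion.2 ⟨k, mem_image_of_mem _ ih⟩
  -- backward step with norm control
  have hpre : ∀ Λ : Set ℂ, Λ = (⋃ k : Fin m, (fun x => β * x + z k) '' Λ) →
      ∀ x ∈ Λ, ∃ y ∈ Λ, Rel y x ∧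
        ‖y‖ ≤ (‖x‖ + Z) / ‖β‖ := by
    intro Λ heq x hx
    rw [heq] at hx
    obtain ⟨k, y, hy, hxy⟩ := mem_iUnion.1 hx
    refine ⟨y, hy, ⟨k, hxy.symm⟩, ?_⟩
    have h1 : β * y = x - z k := by rw [← hxy]; ring
    have h2 : ‖β‖ * ‖y‖ = ‖x - z k‖ := by
      rw [← norm_mul, h1]
    have h3 : ‖x - z k‖ ≤ ‖x‖ + Z := by
      calc ‖x - z k‖ ≤ ‖x‖ + ‖z k‖ :=
            norm_sub_le _ _
        _ ≤ ‖x‖ + Z := by linarith [hZ k]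
    rw [le_div_iff₀ hβ0, mul_comm]
    linarith [h2, h3]
  -- every point of a solution is reachable from a point in the ball of radius R+1
  have hchain : ∀ Λ : Set ℂ, Λ = (⋃ k : Fin m, (fun x => β * x + z k) '' Λ) →
      ∀ n : ℕ, ∀ x ∈ Λ, ‖x‖ ≤ R + ‖β‖ ^ n →
      ∃ y ∈ Λ, ‖y‖ ≤ R + 1 ∧ Relation.ReflTransGen Rel y x := by
    intro Λ heq n
    induction n with
    | zero =>
      intro x hx hb
      exact ⟨x, hx, by simpa using hb, Relation.ReflTransGen.refl⟩
    | succ n ih =>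
      intro x hx hb
      obtain ⟨y, hy, hrel, hyb⟩ := hpre Λ heq x hx
      have hpow : (0:ℝ) < ‖β‖ ^ n := pow_pos hβ0 n
      have hbnd : ‖y‖ ≤ R + ‖β‖ ^ n := by
        have : (‖x‖ + Z) / ‖β‖ ≤ R + ‖β‖ ^ n := by
          rw [div_le_iff₀ hβ0]
          have hpows : ‖β‖ ^ (n + 1) = ‖β‖ ^ n * ‖β‖ := by
            ring
          rw [hpows] at hb
          nlinarith [hb, hRZ, hpow]
        linarith
      obtain ⟨w, hw, hwb, hchain'⟩ := ih y hy hbnd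
      exact ⟨w, hw, hwb, hchain'.tail hrel⟩
  -- existence of n
  have hexp : ∀ x : ℂ, ∃ n : ℕ, ‖x‖ ≤ R + ‖β‖ ^ n := by
    intro x
    obtain ⟨n, hn⟩ := pow_unbounded_of_one_lt (‖x‖) hβ
    exact ⟨n, by linarith [hn.le]⟩
  -- key: a solution is determined below another by its trace on F
  have hkey : ∀ Λ₁ ∈ S, ∀ Λ₂ ∈ S, Λ₁ ∩ F ⊆ Λ₂ → Λ₁ ⊆ Λ₂ := by
    intro Λ₁ h₁ Λ₂ h₂ hsub x hx
    obtain ⟨n, hn⟩ := hexp x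
    obtain ⟨y, hy, hyb, hch⟩ := hchain Λ₁ h₁.2 n x hx hn
    have hyF : y ∈ Λ₁ ∩ F := ⟨hy, h₁.1 hy, by
      simpa [Complex.dist_eq] using hyb⟩
    exact hfwd Λ₂ h₂.2 y x hch (hsub hyF)
  refine ⟨?_, ?_, ?_, ?_⟩
  · -- finiteness
    have hinj : Set.InjOn (fun Λ => Λ ∩ F) S := by
      intro Λ₁ h₁ Λ₂ h₂ h
      simp only at h
      exact Set.Subset.antisymm
        (hkey Λ₁ h₁ Λ₂ h₂ (h ▸ Set.inter_subset_left))
        (hkey Λ₂ h₂ Λ₁ h₁ (h ▸ Set.inter_subset_left))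
    refine Set.Finite.of_finite_image ?_ hinj
    exact hF.finite_subsets.subset (by rintro t ⟨Λ, _, rfl⟩; exact inter_subset_right)
  · -- union is contained in L
    rintro x ⟨Λ, hΛ, hx⟩
    exact hΛ.1 hx
  · -- self-similarity for the union
    apply Set.Subset.antisymm
    · rintro x ⟨Λ, hΛ, hx⟩
      rw [hΛ.2] at hx
      obtain ⟨k, y, hy, hxy⟩ := mem_iUnion.1 hx
      exact mem_iUnion.2 ⟨k, y, ⟨Λ, hΛ, hy⟩, hxy⟩
    · rintro x hx
      obtain ⟨k, y, ⟨Λ, hΛ, hy⟩, hxy⟩ := mem_iUnion.1 hx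
      refine ⟨Λ, hΛ, ?_⟩
      rw [hΛ.2]
      exact mem_iUnion.2 ⟨k, y, hy, hxy⟩
  · -- maximality
    intro Λ hL heq x hx
    exact ⟨Λ, ⟨hL, heq⟩, hx⟩
end

section
/- Assume in addition that the ℝ-linear span of Γ is all of ℂ × ℂ (so Γ is a lattice in ℂ × ℂ ≅ ℝ⁴) and that the image of Γ under the projection (x, y) ↦ y is dense in ℂ. If the window W ⊆ ℂ has nonempty interior, then the model set Λ(W) is relatively dense: there exists R > 0 such that for every z ∈ ℂ there is x ∈ Λ(W) with |z − x| ≤ R. -/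
/-- If the discrete subgroup `Γ ≤ ℂ × ℂ` spans `ℂ × ℂ` over `ℝ` (so it is a lattice),
its projection to the second (internal) factor is dense, and the window `W` has
nonempty interior, then the model set `Λ(W)` is relatively dense. -/
theorem stmt_7 (Γ : AddSubgroup (ℂ × ℂ))
    (hΓ : ∀ B : Set (ℂ × ℂ), Bornology.IsBounded B → (B ∩ (Γ : Set (ℂ × ℂ))).Finite)
    (hspan : Submodule.span ℝ (Γ : Set (ℂ × ℂ)) = ⊤)
    (hdense : Dense (Prod.snd '' (Γ : Set (ℂ × ℂ))))
    (W : Set ℂ) (hW : (interior W).Nonempty) :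
    ∃ R > 0, ∀ z : ℂ, ∃ x ∈ {x : ℂ | ∃ y ∈ W, (x, y) ∈ Γ}, ‖z - x‖ ≤ R := by
  classical
  -- a ball inside the window
  obtain ⟨w₀, hw₀⟩ := hW
  obtain ⟨ε, hε, hball⟩ := Metric.isOpen_iff.mp isOpen_interior w₀ hw₀
  have hballW : Metric.ball w₀ ε ⊆ W := hball.trans interior_subset
  -- extract a basis of ℂ × ℂ contained in Γ
  obtain ⟨s, hsΓ, hsspan, hli⟩ := exists_linearIndependent ℝ (Γ : Set (ℂ × ℂ))
  have hsfin : s.Finite := hli.setFinite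
  haveI : Fintype s := hsfin.fintype
  have hsp : ⊤ ≤ Submodule.span ℝ (Set.range ((↑) : s → ℂ × ℂ)) := by
    rw [Subtype.range_coe, hsspan, hspan]
  let b : Module.Basis s ℝ (ℂ × ℂ) := Module.Basis.mk hli hsp
  have hb : ∀ i : s, b i = (i : ℂ × ℂ) := fun i => by simp [b]
  -- every ℤ-combination of b lies in Γ
  have hZΓ : Submodule.span ℤ (Set.range b) ≤ AddSubgroup.toIntSubmodule Γ := by
    rw [Submodule.span_le]
    rintro _ ⟨i, rfl⟩
    rw [hb]
    exact hsΓ i.2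
  set R₀ : ℝ := ∑ i, ‖b i‖ with hR₀
  have hR₀0 : 0 ≤ R₀ := Finset.sum_nonneg fun i _ => norm_nonneg _
  -- finitely many correctors: second coordinates ε-dense in closedBall 0 R₀
  have hcover : Metric.closedBall (0 : ℂ) R₀ ⊆
      ⋃ γ ∈ (Γ : Set (ℂ × ℂ)), Metric.ball (Prod.snd γ) ε := by
    intro t _
    obtain ⟨y, ⟨γ, hγΓ, rfl⟩, hyt⟩ := hdense.exists_dist_lt t hε
    exact Set.mem_biUnion hγΓ (by simpa [Metric.mem_ball] using hyt)
  obtain ⟨F, hFΓ, hFfin, hFcover⟩ :=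
    (isCompact_closedBall (0 : ℂ) R₀).elim_finite_subcover_image
      (fun γ _ => Metric.isOpen_ball) hcover
  set C : ℝ := ∑ γ ∈ hFfin.toFinset, ‖γ.1‖ with hC
  have hC0 : 0 ≤ C := Finset.sum_nonneg fun γ _ => norm_nonneg _
  have hCle : ∀ γ ∈ F, ‖γ.1‖ ≤ C := fun γ hγ =>
    Finset.single_le_sum (f := fun γ : ℂ × ℂ => ‖γ.1‖)
      (fun δ _ => norm_nonneg _) (hFfin.mem_toFinset.mpr hγ)
  refine ⟨R₀ + C + 1, by positivity, fun z => ?_⟩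
  -- approximate (z, w₀) by a lattice point
  set v : ℂ × ℂ := (z, w₀) with hv
  set g : ℂ × ℂ := (ZSpan.floor b v : ℂ × ℂ) with hg
  have hgΓ : g ∈ Γ := hZΓ (ZSpan.floor b v).2
  have hfr : ZSpan.fract b v = v - g := rfl
  have hfr_le : ‖v - g‖ ≤ R₀ := by rw [← hfr]; exact ZSpan.norm_fract_le b v
  -- the second-coordinate defect lies in the ball covered by correctors
  have ht : w₀ - g.2 ∈ Metric.closedBall (0 : ℂ) R₀ := by
    rw [Metric.mem_closedBall, dist_zero_right]
    exact le_trans (norm_snd_le (v - g)) hfr_le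
  obtain ⟨δ, hδF, htU⟩ := Set.mem_iUnion₂.mp (hFcover ht)
  have hδΓ : δ ∈ Γ := hFΓ hδF
  have htδ : dist (w₀ - g.2) δ.2 < ε := by simpa [Metric.mem_ball] using htU
  refine ⟨g.1 + δ.1, ⟨g.2 + δ.2, ?_, ?_⟩, ?_⟩
  · -- second coordinate is in W
    apply hballW
    rw [Metric.mem_ball]
    have : dist (g.2 + δ.2) w₀ = dist (w₀ - g.2) δ.2 := by
      rw [Complex.dist_eq, Complex.dist_eq, ← norm_neg]
      congr 1; ring
    rw [this]
    exact htδ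
  · -- the pair is in Γ
    have := add_mem hgΓ hδΓ
    exact this
  · -- distance estimate
    have h1 : ‖z - g.1‖ ≤ R₀ := le_trans (norm_fst_le (v - g)) hfr_le
    calc ‖z - (g.1 + δ.1)‖ = ‖(z - g.1) + (-δ.1)‖ := by ring_nf
      _ ≤ ‖z - g.1‖ + ‖-δ.1‖ := norm_add_le _ _
      _ ≤ R₀ + C := by
          rw [norm_neg]
          exact add_le_add h1 (hCle δ hδF)
      _ ≤ R₀ + C + 1 := by linarith
end

section
/- If the window W ⊆ ℂ is bounded, then the model set Λ(W) is a Meyer set: the difference set Λ(W) − Λ(W) = {x₁ − x₂ : x₁, x₂ ∈ Λ(W)} is uniformly discrete, i.e. there exists r > 0 such that |u − v| ≥ r for all distinct u, v ∈ Λ(W) − Λ(W). -/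
open Pointwise

/-- If `Γ` is a discrete subgroup of `ℂ × ℂ` and the window `W ⊆ ℂ` is bounded, then the
model set `Λ(W)` is a Meyer set: its difference set `Λ(W) - Λ(W)` is uniformly discrete. -/
theorem stmt_8 (Γ : AddSubgroup (ℂ × ℂ))
    (hΓ : ∀ B : Set (ℂ × ℂ), Bornology.IsBounded B → (B ∩ (Γ : Set (ℂ × ℂ))).Finite)
    (W : Set ℂ) (hW : Bornology.IsBounded W) :
    ∃ r > 0, ∀ u ∈ ({x : ℂ | ∃ y ∈ W, (x, y) ∈ Γ} - {x : ℂ | ∃ y ∈ W, (x, y) ∈ Γ}),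
      ∀ v ∈ ({x : ℂ | ∃ y ∈ W, (x, y) ∈ Γ} - {x : ℂ | ∃ y ∈ W, (x, y) ∈ Γ}),
      u ≠ v → r ≤ ‖u - v‖ := by
  obtain ⟨C, hC⟩ := hW.subset_closedBall 0
  set B : Set (ℂ × ℂ) := Metric.closedBall 0 1 ×ˢ Metric.closedBall 0 (4 * C) with hB
  have hBbdd : Bornology.IsBounded B :=
    (Metric.isBounded_closedBall).prod (Metric.isBounded_closedBall)
  have hF : (B ∩ (Γ : Set (ℂ × ℂ))).Finite := hΓ B hBbdd
  set T : Finset ℝ := (hF.toFinset.image (fun p => ‖p.1‖)).filter (fun t => 0 < t)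
    with hT
  -- key lemma: any difference of elements of the difference set with |x| ≤ 1 and x ≠ 0
  -- has |x| ∈ T
  have key : ∀ u ∈ ({x : ℂ | ∃ y ∈ W, (x, y) ∈ Γ} - {x : ℂ | ∃ y ∈ W, (x, y) ∈ Γ}),
      ∀ v ∈ ({x : ℂ | ∃ y ∈ W, (x, y) ∈ Γ} - {x : ℂ | ∃ y ∈ W, (x, y) ∈ Γ}),
      u ≠ v → ‖u - v‖ ≤ 1 → ‖u - v‖ ∈ T := by
    intro u hu v hv huv habs
    rw [Set.mem_sub] at hu hv
    obtain ⟨a₁, ⟨ya₁, hya₁, hga₁⟩, a₂, ⟨ya₂, hya₂, hga₂⟩, hae⟩ := hu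
    obtain ⟨b₁, ⟨yb₁, hyb₁, hgb₁⟩, b₂, ⟨yb₂, hyb₂, hgb₂⟩, hbe⟩ := hv
    set y : ℂ := (ya₁ - ya₂) - (yb₁ - yb₂) with hy
    have hmem : ((u - v, y) : ℂ × ℂ) ∈ Γ := by
      have : (((a₁, ya₁) - (a₂, ya₂)) - ((b₁, yb₁) - (b₂, yb₂)) : ℂ × ℂ) ∈ Γ :=
        sub_mem (sub_mem hga₁ hga₂) (sub_mem hgb₁ hgb₂)
      have heq : (((a₁, ya₁) - (a₂, ya₂)) - ((b₁, yb₁) - (b₂, yb₂)) : ℂ × ℂ) = (u - v, y) := by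
        simp [Prod.ext_iff, ← hae, ← hbe, hy]
      rwa [heq] at this
    have hnormy : ‖y‖ ≤ 4 * C := by
      have h1 := hC hya₁; have h2 := hC hya₂; have h3 := hC hyb₁; have h4 := hC hyb₂
      simp only [Metric.mem_closedBall, Complex.dist_eq, sub_zero] at h1 h2 h3 h4
      calc ‖y‖ ≤ ‖ya₁ - ya₂‖ + ‖yb₁ - yb₂‖ := by
            simpa using norm_sub_le (ya₁ - ya₂) (yb₁ - yb₂)
        _ ≤ (‖ya₁‖ + ‖ya₂‖) + (‖yb₁‖ + ‖yb₂‖) := by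
            gcongr <;> exact norm_sub_le _ _
        _ ≤ 4 * C := by linarith
    have hinB : ((u - v, y) : ℂ × ℂ) ∈ B ∩ (Γ : Set (ℂ × ℂ)) := by
      refine ⟨⟨?_, ?_⟩, hmem⟩
      · simpa [Complex.dist_eq] using habs
      · simpa [Complex.dist_eq] using hnormy
    rw [hT]
    refine Finset.mem_filter.mpr ⟨?_, ?_⟩
    · exact Finset.mem_image.mpr ⟨(u - v, y), hF.mem_toFinset.mpr hinB, rfl⟩
    · exact norm_pos_iff.mpr (sub_ne_zero.mpr huv)
  by_cases hTne : T.Nonempty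
  · refine ⟨min 1 (T.min' hTne), ?_, ?_⟩
    · refine lt_min one_pos ?_
      exact (Finset.mem_filter.mp (T.min'_mem hTne)).2
    · intro u hu v hv huv
      by_cases hle : ‖u - v‖ ≤ 1
      · exact le_trans (min_le_right _ _) (T.min'_le _ (key u hu v hv huv hle))
      · exact le_trans (min_le_left _ _) (le_of_not_ge hle)
  · refine ⟨1, one_pos, ?_⟩
    intro u hu v hv huv
    by_contra hlt
    push_neg at hlt
    exact hTne ⟨_, key u hu v hv huv hlt.le⟩
end

section
/- Let g_k(x) = βx + z_k (k = 1, …, m) with |β| > 1, let g'_k(x) = β'x + w_k with 0 < |β'| < 1 and w₁, …, w_m ∈ ℂ, and let A ⊆ ℂ be a nonempty compact set with A = ⋃_{k=1}^m g'_k(A). Let Λ ⊆ ℂ be a nonempty, closed and discrete set with Λ = ⋃_{k=1}^m g_k(Λ), and let φ : ℂ → ℂ be a map satisfying the conjugacy relation φ(g_k(x)) = g'_k(φ(x)) for all x ∈ Λ and all k = 1, …, m. Then φ(Λ) ⊆ A and φ(Λ) is dense in A, i.e. the closure of φ(Λ) equals A. -/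
/-- Composition of the affine maps `y ↦ c y + d (ks j)` for `j = n-1, …, 0`
(outermost map corresponds to `ks 0`). -/
noncomputable def wordMap (c : ℂ) {m : ℕ} (d : Fin m → ℂ) (ks : ℕ → Fin m) : ℕ → ℂ → ℂ
  | 0 => id
  | n + 1 => wordMap c d ks n ∘ fun y => c * y + d (ks n)

lemma wordMap_succ (c : ℂ) {m : ℕ} (d : Fin m → ℂ) (ks : ℕ → Fin m) (n : ℕ) (y : ℂ) :
    wordMap c d ks (n + 1) y = wordMap c d ks n (c * y + d (ks n)) := rfl

lemma wordMap_sub (c : ℂ) {m : ℕ} (d : Fin m → ℂ) (ks : ℕ → Fin m) (n : ℕ) (p q : ℂ) :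
    wordMap c d ks n p - wordMap c d ks n q = c ^ n * (p - q) := by
  induction n generalizing p q with
  | zero => simp [wordMap]
  | succ n ih =>
    rw [wordMap_succ, wordMap_succ, ih]
    ring

lemma wordMap_mem (c : ℂ) {m : ℕ} (d : Fin m → ℂ) (ks : ℕ → Fin m) (S : Set ℂ)
    (h : ∀ k, ∀ y ∈ S, c * y + d k ∈ S) {y : ℂ} (hy : y ∈ S) (n : ℕ) :
    wordMap c d ks n y ∈ S := by
  induction n generalizing y with
  | zero => simpa [wordMap] using hy
  | succ n ih => rw [wordMap_succ]; exact ih (h _ _ hy)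

lemma wordMap_conj {m : ℕ} (β β' : ℂ) (z w : Fin m → ℂ) (Λ : Set ℂ) (φ : ℂ → ℂ)
    (hφ : ∀ x ∈ Λ, ∀ k : Fin m, φ (β * x + z k) = β' * φ x + w k)
    (hst : ∀ k, ∀ y ∈ Λ, β * y + z k ∈ Λ)
    (ks : ℕ → Fin m) (n : ℕ) {y : ℂ} (hy : y ∈ Λ) :
    φ (wordMap β z ks n y) = wordMap β' w ks n (φ y) := by
  induction n generalizing y with
  | zero => rfl
  | succ n ih =>
    rw [wordMap_succ, wordMap_succ, ih (hst _ _ hy), hφ y hy]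


lemma exists_backward_seq {m : ℕ} (c : ℂ) (d : Fin m → ℂ) (S : Set ℂ)
    (hS : ∀ y : S, ∃ p : Fin m × S, (y : ℂ) = c * (p.2 : ℂ) + d p.1) {x : ℂ} (hx : x ∈ S) :
    ∃ (xs : ℕ → ℂ) (ks : ℕ → Fin m), xs 0 = x ∧ (∀ n, xs n ∈ S) ∧
      ∀ n, xs n = c * xs (n + 1) + d (ks n) := by
  choose F hF using hS
  refine ⟨fun n => (((fun s => (F s).2)^[n] ⟨x, hx⟩ : S) : ℂ),
    fun n => (F ((fun s => (F s).2)^[n] ⟨x, hx⟩)).1, rfl,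
    fun n => ((fun s => (F s).2)^[n] ⟨x, hx⟩).2, fun n => ?_⟩
  simp only [Function.iterate_succ_apply']
  exact hF _

/-- If `Λ` is a nonempty, closed and discrete solution of `Λ = ⋃ₖ g_k(Λ)` for the
expanding IFS `g_k(x) = β x + z_k`, `A` is the attractor of a contracting IFS
`g'_k(x) = β' x + w_k`, and `φ` conjugates the two systems on `Λ`, then `φ(Λ)` is a
dense subset of `A`. -/
theorem stmt_11 (m : ℕ) (hm : 0 < m) (β : ℂ) (hβ : 1 < ‖β‖)
    (z : Fin m → ℂ) (β' : ℂ) (hβ'0 : 0 < ‖β'‖) (hβ'1 : ‖β'‖ < 1)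
    (w : Fin m → ℂ)
    (A : Set ℂ) (hAne : A.Nonempty) (hAc : IsCompact A)
    (hA : A = ⋃ k : Fin m, (fun x => β' * x + w k) '' A)
    (Λ : Set ℂ) (hne : Λ.Nonempty) (hcl : IsClosed Λ)
    (hdisc : ∀ B : Set ℂ, Bornology.IsBounded B → (Λ ∩ B).Finite)
    (hsol : Λ = ⋃ k : Fin m, (fun x => β * x + z k) '' Λ)
    (φ : ℂ → ℂ) (hφ : ∀ x ∈ Λ, ∀ k : Fin m, φ (β * x + z k) = β' * φ x + w k) :
    φ '' Λ ⊆ A ∧ closure (φ '' Λ) = A := by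
  set r := ‖β'‖ with hr
  have hβ0 : (0:ℝ) < ‖β‖ := lt_trans one_pos hβ
  have hβne : β ≠ 0 := by
    intro h; rw [h] at hβ; simp at hβ; linarith
  -- forward invariance
  have habs : ∀ k : Fin m, ∀ y ∈ A, β' * y + w k ∈ A := by
    intro k y hy
    rw [hA]
    exact Set.mem_iUnion.2 ⟨k, ⟨y, hy, rfl⟩⟩
  have hΛmaps : ∀ k : Fin m, ∀ y ∈ Λ, β * y + z k ∈ Λ := by
    intro k y hy
    rw [hsol]
    exact Set.mem_iUnion.2 ⟨k, ⟨y, hy, rfl⟩⟩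
  obtain ⟨a₀, ha₀⟩ := hAne
  -- bound on A
  obtain ⟨M, hM⟩ : ∃ M, ∀ a ∈ A, ‖a‖ ≤ M := by
    obtain ⟨M, hM⟩ := hAc.isBounded.exists_norm_le
    exact ⟨M, fun a ha => hM a ha⟩
  -- r^n → 0
  have hrtend : Filter.Tendsto (fun n : ℕ => r ^ n) Filter.atTop (nhds 0) :=
    tendsto_pow_atTop_nhds_zero_of_lt_one hβ'0.le hβ'1
  -- a bound on the translations z
  set Z : ℝ := ∑ k : Fin m, ‖z k‖ with hZdef
  have hZ0 : 0 ≤ Z := Finset.sum_nonneg fun k _ => (norm_nonneg _)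
  have hZ : ∀ k, ‖z k‖ ≤ Z :=
    fun k => Finset.single_le_sum (fun k _ => norm_nonneg _) (Finset.mem_univ k)
  -- Part 1: φ '' Λ ⊆ A
  have hsub : φ '' Λ ⊆ A := by
    rintro _ ⟨x, hx, rfl⟩
    -- construct the backward orbit of x
    have hstep : ∀ y : Λ, ∃ p : Fin m × Λ, (y : ℂ) = β * (p.2 : ℂ) + z p.1 := by
      rintro ⟨y, hy⟩
      rw [hsol] at hy
      obtain ⟨k, y', hy', heq⟩ := Set.mem_iUnion.1 hy
      exact ⟨(k, ⟨y', hy'⟩), heq.symm⟩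
    obtain ⟨xs, ks, hxs0, hxsmem, hrec⟩ := exists_backward_seq β z Λ hstep hx
    -- the backward orbit is bounded
    set R : ℝ := max (‖x‖) (Z / (‖β‖ - 1)) with hRdef
    have hβ1 : (0:ℝ) < ‖β‖ - 1 := by linarith
    have hRZ : Z ≤ R * (‖β‖ - 1) := by
      have : Z / (‖β‖ - 1) ≤ R := le_max_right _ _
      calc Z = Z / (‖β‖ - 1) * (‖β‖ - 1) := by field_simp
        _ ≤ R * (‖β‖ - 1) := by gcongr
    have hxsR : ∀ n, ‖xs n‖ ≤ R := by
      intro n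
      induction n with
      | zero => rw [hxs0]; exact le_max_left _ _
      | succ n ih =>
        have hx1 : (xs (n + 1)) = (xs n - z (ks n)) / β := by
          rw [eq_div_iff hβne]
          linear_combination -hrec n
        rw [hx1, norm_div]
        rw [div_le_iff₀ hβ0]
        calc ‖xs n - z (ks n)‖
            ≤ ‖xs n‖ + ‖z (ks n)‖ := by
              simpa [sub_eq_add_neg] using norm_add_le (xs n) (-(z (ks n)))
          _ ≤ R + Z := add_le_add ih (hZ _)
          _ ≤ R * ‖β‖ := by nlinarith
    -- φ is bounded on the (finite) set containing the backward orbit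
    have hSfin : (Λ ∩ Metric.closedBall 0 R).Finite :=
      hdisc _ Metric.isBounded_closedBall
    obtain ⟨K, hK⟩ := (hSfin.image fun s => ‖φ s - a₀‖).bddAbove
    have hKb : ∀ n, ‖φ (xs n) - a₀‖ ≤ K := by
      intro n
      refine hK ⟨xs n, ⟨hxsmem n, ?_⟩, rfl⟩
      simpa [Metric.mem_closedBall, Complex.dist_eq] using hxsR n
    -- key conjugacy identity along the backward orbit
    have hkey : ∀ n, φ x = wordMap β' w ks n (φ (xs n)) := by
      intro n
      induction n with
      | zero => simp [wordMap, hxs0]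
      | succ n ih =>
        have h1 : β' * φ (xs (n + 1)) + w (ks n) = φ (xs n) := by
          rw [← hφ _ (hxsmem (n + 1)) (ks n), ← hrec n]
        rw [wordMap_succ, h1]
        exact ih
    -- φ x is in the closure of A
    have hcls : φ x ∈ closure A := by
      rw [Metric.mem_closure_iff]
      intro ε hε
      have htend : Filter.Tendsto (fun n : ℕ => r ^ n * K) Filter.atTop (nhds 0) := by
        simpa using hrtend.mul_const K
      obtain ⟨n, hn⟩ := (htend.eventually (gt_mem_nhds hε)).exists
      refine ⟨wordMap β' w ks n a₀, wordMap_mem β' w ks A habs ha₀ n, ?_⟩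
      calc dist (φ x) (wordMap β' w ks n a₀)
          = ‖wordMap β' w ks n (φ (xs n)) - wordMap β' w ks n a₀‖ := by
            rw [Complex.dist_eq, ← hkey n]
        _ = r ^ n * ‖φ (xs n) - a₀‖ := by
            rw [wordMap_sub, norm_mul, norm_pow]
        _ ≤ r ^ n * K := by
            exact mul_le_mul_of_nonneg_left (hKb n) (pow_nonneg hβ'0.le n)
        _ < ε := hn
    rwa [hAc.isClosed.closure_eq] at hcls
  refine ⟨hsub, le_antisymm (closure_minimal hsub hAc.isClosed) ?_⟩
  -- Part 2: A ⊆ closure (φ '' Λ)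
  intro a ha
  obtain ⟨x₀, hx₀⟩ := hne
  -- backward orbit of a inside A
  have hstep' : ∀ b : A, ∃ p : Fin m × A, (b : ℂ) = β' * (p.2 : ℂ) + w p.1 := by
    rintro ⟨b, hb⟩
    rw [hA] at hb
    obtain ⟨k, b', hb', heq⟩ := Set.mem_iUnion.1 hb
    exact ⟨(k, ⟨b', hb'⟩), heq.symm⟩
  obtain ⟨as, ks, has0, hasmem, hrec⟩ := exists_backward_seq β' w A hstep' ha
  have hkey : ∀ n, a = wordMap β' w ks n (as n) := by
    intro n
    induction n with
    | zero => simp [wordMap, has0]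
    | succ n ih =>
      rw [wordMap_succ, ← hrec n]
      exact ih
  rw [Metric.mem_closure_iff]
  intro ε hε
  set K : ℝ := ‖φ x₀‖ + M with hKdef
  have hKb : ∀ n, ‖φ x₀ - as n‖ ≤ K := by
    intro n
    calc ‖φ x₀ - as n‖
        ≤ ‖φ x₀‖ + ‖as n‖ := by
          simpa [sub_eq_add_neg] using norm_add_le (φ x₀) (-(as n))
      _ ≤ K := add_le_add le_rfl (hM _ (hasmem n))
  have htend : Filter.Tendsto (fun n : ℕ => r ^ n * K) Filter.atTop (nhds 0) := by
    simpa using hrtend.mul_const K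
  obtain ⟨n, hn⟩ := (htend.eventually (gt_mem_nhds hε)).exists
  refine ⟨φ (wordMap β z ks n x₀),
    ⟨wordMap β z ks n x₀, wordMap_mem β z ks Λ hΛmaps hx₀ n, rfl⟩, ?_⟩
  calc dist a (φ (wordMap β z ks n x₀))
      = dist (φ (wordMap β z ks n x₀)) a := dist_comm _ _
    _ = ‖wordMap β' w ks n (φ x₀) - wordMap β' w ks n (as n)‖ := by
        rw [Complex.dist_eq, wordMap_conj β β' z w Λ φ hφ hΛmaps ks n hx₀, ← hkey n]
    _ = r ^ n * ‖φ x₀ - as n‖ := by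
        rw [wordMap_sub, norm_mul, norm_pow]
    _ ≤ r ^ n * K := mul_le_mul_of_nonneg_left (hKb n) (pow_nonneg hβ'0.le n)
    _ < ε := hn
end

section
/- Let α = π/5 and let n₁, n₂, n₃, n₄ be integers. Put u = n₁e^{2iα} − n₂e^{−iα} − n₃e^{iα} + n₄e^{−2iα} and u' = −n₁e^{−iα} + n₂e^{−2iα} + n₃e^{2iα} − n₄e^{iα}. Then 2(|u|² + |u'|²) = Σ_{i=1}^4 n_i² + Σ_{1≤i<j≤4} (n_i − n_j)². Consequently, if |u| ≤ c and |u'| ≤ c' for real numbers c, c', then Σ_{i=1}^4 n_i² + Σ_{1≤i<j≤4} (n_i − n_j)² ≤ 2(c² + c'²). -/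
open Complex

/-- With `α = π/5`, for integers `n₁,…,n₄` and the points
`u = n₁e^{2iα} − n₂e^{−iα} − n₃e^{iα} + n₄e^{−2iα}` and
`u' = −n₁e^{−iα} + n₂e^{−2iα} + n₃e^{2iα} − n₄e^{iα}` one has
`2(|u|² + |u'|²) = Σᵢ nᵢ² + Σ_{i<j} (nᵢ − nⱼ)²`; consequently `|u| ≤ c` and `|u'| ≤ c'`
imply `Σᵢ nᵢ² + Σ_{i<j} (nᵢ − nⱼ)² ≤ 2(c² + c'²)`. -/
theorem stmt_12 (n₁ n₂ n₃ n₄ : ℤ) (α : ℝ) (hα : α = Real.pi / 5) (u u' : ℂ)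
    (hu : u = (n₁ : ℂ) * Complex.exp (2 * α * I) - (n₂ : ℂ) * Complex.exp (-α * I)
      - (n₃ : ℂ) * Complex.exp (α * I) + (n₄ : ℂ) * Complex.exp (-(2 * α) * I))
    (hu' : u' = -(n₁ : ℂ) * Complex.exp (-α * I) + (n₂ : ℂ) * Complex.exp (-(2 * α) * I)
      + (n₃ : ℂ) * Complex.exp (2 * α * I) - (n₄ : ℂ) * Complex.exp (α * I)) :
    2 * (‖u‖ ^ 2 + ‖u'‖ ^ 2) =
      ((n₁ ^ 2 + n₂ ^ 2 + n₃ ^ 2 + n₄ ^ 2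
        + (n₁ - n₂) ^ 2 + (n₁ - n₃) ^ 2 + (n₁ - n₄) ^ 2
        + (n₂ - n₃) ^ 2 + (n₂ - n₄) ^ 2 + (n₃ - n₄) ^ 2 : ℤ) : ℝ) ∧
    ∀ c c' : ℝ, ‖u‖ ≤ c → ‖u'‖ ≤ c' →
      ((n₁ ^ 2 + n₂ ^ 2 + n₃ ^ 2 + n₄ ^ 2
        + (n₁ - n₂) ^ 2 + (n₁ - n₃) ^ 2 + (n₁ - n₄) ^ 2
        + (n₂ - n₃) ^ 2 + (n₂ - n₄) ^ 2 + (n₃ - n₄) ^ 2 : ℤ) : ℝ)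
        ≤ 2 * (c ^ 2 + c' ^ 2) := by
  set c := Real.cos α with hcdef
  set s := Real.sin α with hsdef
  have hc : c = (1 + Real.sqrt 5) / 4 := by rw [hcdef, hα]; exact Real.cos_pi_div_five
  have h5 : Real.sqrt 5 ^ 2 = 5 := Real.sq_sqrt (by norm_num)
  have hc2 : 4 * c ^ 2 = 2 * c + 1 := by rw [hc]; nlinarith [h5]
  have hsum : s ^ 2 + c ^ 2 = 1 := Real.sin_sq_add_cos_sq α
  -- rewrite the exponentials
  have e2 : Complex.exp (2 * (α : ℂ) * I) = ↑(Real.cos (2 * α)) + ↑(Real.sin (2 * α)) * I := by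
    have h : (2 : ℂ) * ↑α = ((2 * α : ℝ) : ℂ) := by push_cast; ring
    rw [h, Complex.exp_mul_I, Complex.ofReal_cos, Complex.ofReal_sin]
  have e1 : Complex.exp ((α : ℂ) * I) = ↑c + ↑s * I := by
    rw [Complex.exp_mul_I, Complex.ofReal_cos, Complex.ofReal_sin]
  have e1n : Complex.exp (-(α : ℂ) * I) = ↑c - ↑s * I := by
    have h : -(α : ℂ) = ((-α : ℝ) : ℂ) := by push_cast; ring
    rw [h, Complex.exp_mul_I, ← Complex.ofReal_cos, ← Complex.ofReal_sin,
      Real.cos_neg, Real.sin_neg, Complex.ofReal_neg]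
    ring
  have e2n : Complex.exp (-(2 * (α : ℂ)) * I)
      = ↑(Real.cos (2 * α)) - ↑(Real.sin (2 * α)) * I := by
    have h : -(2 * (α : ℂ)) = ((-(2 * α) : ℝ) : ℂ) := by push_cast; ring
    rw [h, Complex.exp_mul_I, ← Complex.ofReal_cos, ← Complex.ofReal_sin,
      Real.cos_neg, Real.sin_neg, Complex.ofReal_neg]
    ring
  have hC : Real.cos (2 * α) = 2 * c ^ 2 - 1 := by
    rw [Real.cos_two_mul]
  have hS : Real.sin (2 * α) = 2 * s * c := Real.sin_two_mul α
  set C := Real.cos (2 * α)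
  set S := Real.sin (2 * α)
  have hx : u = ↑((n₁ + n₄ : ℝ) * C - (n₂ + n₃ : ℝ) * c)
      + ↑((n₁ - n₄ : ℝ) * S + (n₂ - n₃ : ℝ) * s) * I := by
    rw [hu, e2, e1n, e1, e2n]; push_cast; ring
  have hx' : u' = ↑((n₂ + n₃ : ℝ) * C - (n₁ + n₄ : ℝ) * c)
      + ↑((n₃ - n₂ : ℝ) * S + (n₁ - n₄ : ℝ) * s) * I := by
    rw [hu', e2, e1n, e1, e2n]; push_cast; ring
  have habs : ‖u‖ ^ 2
      = ((n₁ + n₄ : ℝ) * C - (n₂ + n₃ : ℝ) * c) ^ 2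
        + ((n₁ - n₄ : ℝ) * S + (n₂ - n₃ : ℝ) * s) ^ 2 := by
    rw [hx, Complex.sq_norm, Complex.normSq_add_mul_I]
  have habs' : ‖u'‖ ^ 2
      = ((n₂ + n₃ : ℝ) * C - (n₁ + n₄ : ℝ) * c) ^ 2
        + ((n₃ - n₂ : ℝ) * S + (n₁ - n₄ : ℝ) * s) ^ 2 := by
    rw [hx', Complex.sq_norm, Complex.normSq_add_mul_I]
  have key : 2 * (‖u‖ ^ 2 + ‖u'‖ ^ 2) =
      ((n₁ ^ 2 + n₂ ^ 2 + n₃ ^ 2 + n₄ ^ 2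
        + (n₁ - n₂) ^ 2 + (n₁ - n₃) ^ 2 + (n₁ - n₄) ^ 2
        + (n₂ - n₃) ^ 2 + (n₂ - n₄) ^ 2 + (n₃ - n₄) ^ 2 : ℤ) : ℝ) := by
    rw [habs, habs', hC, hS]
    push_cast
    linear_combination
      (2*(n₄:ℝ)^2 + 2*(n₃:ℝ)^2 - 4*(n₂:ℝ)*(n₃:ℝ) + 2*(n₂:ℝ)^2 - 4*(n₁:ℝ)*(n₄:ℝ)
        + 2*(n₁:ℝ)^2 + 8*c^2*(n₄:ℝ)^2 + 8*c^2*(n₃:ℝ)^2 - 16*c^2*(n₂:ℝ)*(n₃:ℝ)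
        + 8*c^2*(n₂:ℝ)^2 - 16*c^2*(n₁:ℝ)*(n₄:ℝ) + 8*c^2*(n₁:ℝ)^2) * hsum
      + (-2*(n₃:ℝ)*(n₄:ℝ) - 2*(n₂:ℝ)*(n₄:ℝ) - 2*(n₂:ℝ)*(n₃:ℝ) - 2*(n₁:ℝ)*(n₄:ℝ)
        - 2*(n₁:ℝ)*(n₃:ℝ) - 2*(n₁:ℝ)*(n₂:ℝ) - 4*c*(n₃:ℝ)*(n₄:ℝ) - 4*c*(n₂:ℝ)*(n₄:ℝ)
        + 4*c*(n₂:ℝ)*(n₃:ℝ) + 4*c*(n₁:ℝ)*(n₄:ℝ) - 4*c*(n₁:ℝ)*(n₃:ℝ)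
        - 4*c*(n₁:ℝ)*(n₂:ℝ) + 8*c^2*(n₂:ℝ)*(n₃:ℝ) + 8*c^2*(n₁:ℝ)*(n₄:ℝ)) * hc2
  refine ⟨key, fun a b ha hb => ?_⟩
  rw [← key]
  have h1 := norm_nonneg u
  have h2 := norm_nonneg u'
  nlinarith [ha, hb, h1, h2]
end

section
/- Let Λ ⊆ ℂ satisfy Λ = ⋃_{k=1}^m g_k(Λ), and suppose δ > 0 is such that |x − y| ≥ δ for all distinct x, y ∈ Λ. If a point y ∈ Λ has the maximal number m of predecessors, i.e. for every k ∈ {1, …, m} there exists x_k ∈ Λ with g_k(x_k) = y, then |y − x| ≥ δ·|β| for every x ∈ Λ with x ≠ y. -/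
/-- In a solution `Λ` of `Λ = ⋃ₖ g_k(Λ)` with minimal distance `δ` between points,
a point `y` with the maximal number `m` of predecessors has distance at least `δ·|β|`
from every other point of `Λ`. -/
theorem stmt_16 (m : ℕ) (hm : 0 < m) (β : ℂ) (hβ : 1 < ‖β‖)
    (z : Fin m → ℂ) (Λ : Set ℂ)
    (hsol : Λ = ⋃ k : Fin m, (fun x => β * x + z k) '' Λ)
    (δ : ℝ) (hδ : 0 < δ)
    (hmin : ∀ x ∈ Λ, ∀ y ∈ Λ, x ≠ y → δ ≤ ‖x - y‖)
    (y : ℂ) (hy : y ∈ Λ)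
    (hpred : ∀ k : Fin m, ∃ x ∈ Λ, β * x + z k = y)
    (x : ℂ) (hx : x ∈ Λ) (hxy : x ≠ y) :
    δ * ‖β‖ ≤ ‖y - x‖ := by
  rw [hsol] at hx
  obtain ⟨_, ⟨k, rfl⟩, w, hwΛ, hwx⟩ := hx
  obtain ⟨v, hvΛ, hvy⟩ := hpred k
  have hvw : v ≠ w := by
    rintro rfl
    exact hxy (hwx.symm.trans hvy)
  have : y - x = β * (v - w) := by rw [← hvy, ← hwx]; ring
  rw [this, norm_mul, mul_comm δ]
  exact mul_le_mul_of_nonneg_left (hmin v hvΛ w hwΛ hvw) (norm_nonneg _)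
end

section
/- Let τ = (1 + √5)/2 and ζ = e^{2πi/5}. Then the closed ball of radius τ around 0 is covered by the closed unit balls around the fifth roots of unity: for every y ∈ ℂ with |y| ≤ τ there exists k ∈ {1, …, 5} with |y − ζ^k| ≤ 1. Equivalently, for the contracting IFS g'_k(x) = −x/τ + ζ^k (k = 1, …, 5), the closed ball B of radius τ around 0 satisfies B ⊆ ⋃_{k=1}^5 g'_k(B). -/
open Complex

/-- With `τ = (1+√5)/2` and `ζ = e^{2πi/5}`, the closed ball of radius `τ` around `0` is
covered by the closed unit balls around the fifth roots of unity; equivalently, for the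
contracting IFS `g'_k(x) = -x/τ + ζ^k` the closed ball `B` of radius `τ` around `0`
satisfies `B ⊆ ⋃ₖ g'_k(B)`. -/
theorem stmt_17 (τ : ℝ) (hτ : τ = (1 + Real.sqrt 5) / 2) (ζ : ℂ)
    (hζ : ζ = Complex.exp (2 * Real.pi * I / 5)) :
    (∀ y : ℂ, ‖y‖ ≤ τ → ∃ k : Fin 5, ‖y - ζ ^ ((k : ℕ) + 1)‖ ≤ 1) ∧
    Metric.closedBall (0 : ℂ) τ ⊆
      ⋃ k : Fin 5, (fun x => -x / (τ : ℂ) + ζ ^ ((k : ℕ) + 1)) ''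
        Metric.closedBall (0 : ℂ) τ := by
  have hπ : (0:ℝ) < Real.pi := Real.pi_pos
  have hs5 : (0:ℝ) ≤ Real.sqrt 5 := Real.sqrt_nonneg 5
  have hτpos : 0 < τ := by rw [hτ]; linarith
  have key : ∀ y : ℂ, ‖y‖ ≤ τ → ∃ k : Fin 5,
      ‖y - ζ ^ ((k : ℕ) + 1)‖ ≤ 1 := by
    intro y hy
    set r := ‖y‖ with hr
    set θ := Complex.arg y with hθ
    set m : ℤ := round (5 * θ / (2 * Real.pi)) with hm
    have hround : |5 * θ / (2 * Real.pi) - m| ≤ 1 / 2 := abs_sub_round _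
    set φ : ℝ := 2 * Real.pi * m / 5 with hφ
    have hang : |θ - φ| ≤ Real.pi / 5 := by
      have heq : θ - φ = (2 * Real.pi / 5) * (5 * θ / (2 * Real.pi) - m) := by
        rw [hφ]; field_simp
      rw [heq, abs_mul, abs_of_pos (by positivity : (0:ℝ) < 2 * Real.pi / 5)]
      nlinarith
    -- main estimate for any exponent congruent to m mod 5
    have main : ∀ N : ℕ, (∃ j : ℤ, (N : ℤ) = m + 5 * j) →
        ‖y - ζ ^ N‖ ≤ 1 := by
      rintro N ⟨j, hj⟩
      have hζK : ζ ^ N = Complex.exp ((φ : ℂ) * I) := by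
        rw [hζ, ← Complex.exp_nat_mul]
        have hcast : (N : ℂ) = (m : ℂ) + 5 * (j : ℂ) := by exact_mod_cast hj
        have harg : (N : ℂ) * (2 * (Real.pi : ℂ) * I / 5) =
            (φ : ℂ) * I + (j : ℂ) * (2 * (Real.pi : ℂ) * I) := by
          rw [hcast, hφ]
          push_cast
          field_simp
        rw [harg, Complex.exp_add, Complex.exp_int_mul_two_pi_mul_I, mul_one]
      have habs1 : ‖Complex.exp ((φ:ℝ) * I)‖ = 1 :=
        Complex.norm_exp_ofReal_mul_I φ
      have hysplit : y = (r : ℂ) * Complex.exp ((θ:ℝ) * I) :=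
        (Complex.norm_mul_exp_arg_mul_I y).symm
      have hre : (y * (starRingEnd ℂ) (ζ ^ N)).re = r * Real.cos (θ - φ) := by
        rw [hζK, hysplit, ← Complex.exp_conj]
        have hc : (starRingEnd ℂ) ((φ:ℂ) * I) = -(φ:ℂ) * I := by
          rw [map_mul, Complex.conj_I, Complex.conj_ofReal]; ring
        rw [hc, mul_assoc, ← Complex.exp_add]
        have h2 : (θ:ℂ) * I + -(φ:ℂ) * I = ((θ - φ : ℝ) : ℂ) * I := by push_cast; ring
        rw [h2, Complex.re_ofReal_mul, Complex.exp_ofReal_mul_I_re]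
      have hnormsq : ‖y - ζ ^ N‖ ^ 2 =
          r ^ 2 + 1 - 2 * (r * Real.cos (θ - φ)) := by
        rw [Complex.sq_norm, Complex.normSq_sub, hre]
        have h2 : Complex.normSq (ζ ^ N) = 1 := by
          rw [← Complex.sq_norm, hζK, habs1]; norm_num
        rw [← Complex.sq_norm, h2]
      have hcos : Real.cos (Real.pi / 5) ≤ Real.cos (θ - φ) := by
        rw [← Real.cos_abs (θ - φ)]
        exact Real.cos_le_cos_of_nonneg_of_le_pi (abs_nonneg _) (by linarith) hang
      rw [Real.cos_pi_div_five] at hcos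
      have hrpos : 0 ≤ r := norm_nonneg y
      have hsq : ‖y - ζ ^ N‖ ^ 2 ≤ 1 := by
        rw [hnormsq]
        have hmul : r * ((1 + Real.sqrt 5) / 4) ≤ r * Real.cos (θ - φ) :=
          mul_le_mul_of_nonneg_left hcos hrpos
        nlinarith [hy, hτ]
      nlinarith [norm_nonneg (y - ζ ^ N)]
    -- choose the right k
    have hm5a : 0 ≤ m % 5 := Int.emod_nonneg m (by norm_num)
    have hm5b : m % 5 < 5 := Int.emod_lt_of_pos m (by norm_num)
    set n : ℕ := (m % 5).toNat with hn
    refine ⟨⟨(n + 4) % 5, Nat.mod_lt _ (by norm_num)⟩, main _ ?_⟩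
    have h1 : (n : ℤ) = m % 5 := by omega
    refine ⟨(((n + 4) % 5 + 1 : ℕ) : ℤ) / 5 - m / 5, ?_⟩
    have h2 : ((((⟨(n + 4) % 5, Nat.mod_lt _ (by norm_num)⟩ : Fin 5) : ℕ) + 1 : ℕ) : ℤ)
        = (((n + 4) % 5 : ℕ) : ℤ) + 1 := by push_cast; ring
    push_cast
    omega
  refine ⟨key, ?_⟩
  intro y hy
  rw [Metric.mem_closedBall, dist_zero_right] at hy
  obtain ⟨k, hk⟩ := key y (by simpa using hy)
  refine Set.mem_iUnion.2 ⟨k, ⟨(τ : ℂ) * (ζ ^ ((k:ℕ)+1) - y), ?_, ?_⟩⟩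
  · rw [Metric.mem_closedBall, dist_zero_right]
    have h3 : ‖(τ : ℂ) * (ζ ^ ((k:ℕ)+1) - y)‖ = τ * ‖y - ζ ^ ((k:ℕ)+1)‖ := by
      rw [norm_mul]
      rw [Complex.norm_real, Real.norm_eq_abs, abs_of_pos hτpos, norm_sub_rev]
    rw [h3]
    nlinarith
  · have hτne : (τ : ℂ) ≠ 0 := by exact_mod_cast hτpos.ne'
    field_simp
    ring
end

section
/- Every nonempty, closed and discrete set Λ ⊆ σ₀(𝓞_K) satisfying the self-similarity equation Λ = ⋃_{k=1}^m g_k(Λ) is contained in the model set Λ*; that is, for every x ∈ 𝓞_K with σ₀(x) ∈ Λ one has σ(x) ∈ A_σ for every embedding σ : K → ℂ with |σ(β)| < 1. -/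
/-- Every nonempty, closed and discrete subset `Λ` of `σ₀(𝓞_K)` solving the
self-similarity equation `Λ = ⋃ₖ g_k(Λ)` for the expanding IFS `g_k(x) = σ₀(β)x + σ₀(z_k)`
is contained in the model set: every `x ∈ 𝓞_K` with `σ₀(x) ∈ Λ` has all its conjugates
`σ(x)` in the corresponding attractors `A σ`. -/
theorem stmt_19 (K : Type*) [Field K] [NumberField K] (σ₀ : K →+* ℂ)
    (β : NumberField.RingOfIntegers K) (hunit : IsUnit β)
    (hβ₀ : 1 < ‖σ₀ (β : K)‖)
    (hβ : ∀ σ : K →+* ℂ, σ ≠ σ₀ → σ ≠ (starRingEnd ℂ).comp σ₀ →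
      ‖σ (β : K)‖ < 1)
    (m : ℕ) (hm : 0 < m) (z : Fin m → NumberField.RingOfIntegers K)
    (A : (K →+* ℂ) → Set ℂ)
    (hA : ∀ σ : K →+* ℂ, ‖σ (β : K)‖ < 1 →
      (A σ).Nonempty ∧ IsCompact (A σ) ∧
        A σ = ⋃ k : Fin m, (fun x => σ (β : K) * x + σ (z k : K)) '' A σ)
    (Λ : Set ℂ) (hne : Λ.Nonempty) (hcl : IsClosed Λ)
    (hdisc : ∀ B : Set ℂ, Bornology.IsBounded B → (Λ ∩ B).Finite)
    (hsub : Λ ⊆ {w : ℂ | ∃ x : NumberField.RingOfIntegers K, σ₀ (x : K) = w})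
    (hsol : Λ = ⋃ k : Fin m, (fun x => σ₀ (β : K) * x + σ₀ (z k : K)) '' Λ)
    (x : NumberField.RingOfIntegers K) (hx : σ₀ (x : K) ∈ Λ) :
    ∀ σ : K →+* ℂ, ‖σ (β : K)‖ < 1 → σ (x : K) ∈ A σ := by
  classical
  intro σ hσ
  obtain ⟨hAne, hAcp, hAeq⟩ := hA σ hσ
  obtain ⟨a, ha⟩ := hAne
  have hinj : Function.Injective (fun c : NumberField.RingOfIntegers K => σ₀ (c : K)) := by
    intro c d h
    exact NumberField.RingOfIntegers.coe_injective (σ₀.injective h)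
  -- key step: pull back one level
  have key : ∀ c : NumberField.RingOfIntegers K, σ₀ (c : K) ∈ Λ →
      ∃ p : {c : NumberField.RingOfIntegers K // σ₀ (c : K) ∈ Λ} × Fin m,
        c = β * p.1.1 + z p.2 := by
    intro c hc
    rw [hsol] at hc
    obtain ⟨k, hk⟩ := Set.mem_iUnion.1 hc
    obtain ⟨w, hwΛ, hweq⟩ := hk
    obtain ⟨y, hy⟩ := hsub hwΛ
    have heq : σ₀ (c : K) = σ₀ ((β * y + z k : NumberField.RingOfIntegers K) : K) := by
      push_cast
      rw [map_add, map_mul, hy]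
      exact hweq.symm
    refine ⟨⟨⟨y, hy ▸ hwΛ⟩, k⟩, ?_⟩
    exact hinj heq
  have key' : ∀ c : {c : NumberField.RingOfIntegers K // σ₀ (c : K) ∈ Λ},
      ∃ p : {c : NumberField.RingOfIntegers K // σ₀ (c : K) ∈ Λ} × Fin m,
        c.1 = β * p.1.1 + z p.2 := fun c => key c.1 c.2
  choose next hnext using key'
  set X : ℕ → {c : NumberField.RingOfIntegers K // σ₀ (c : K) ∈ Λ} :=
    fun n => (fun c => (next c).1)^[n] ⟨x, hx⟩ with hX
  have hX0 : X 0 = ⟨x, hx⟩ := rfl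
  have hXsucc : ∀ n, X (n + 1) = (next (X n)).1 := by
    intro n
    simp only [hX, Function.iterate_succ_apply']
  set κ : ℕ → Fin m := fun n => (next (X n)).2 with hκ
  have hrel : ∀ n, ((X n).1 : NumberField.RingOfIntegers K) = β * (X (n+1)).1 + z (κ n) := by
    intro n
    rw [hXsucc n]
    exact hnext (X n)
  -- boundedness of σ₀ (X n)
  have hmne : Nonempty (Fin m) := ⟨⟨0, hm⟩⟩
  set b := ‖σ₀ (β : K)‖ with hb
  set C := Finset.univ.sup' (Finset.univ_nonempty) (fun k => ‖σ₀ (z k : K)‖) with hC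
  have hC0 : ∀ k, ‖σ₀ (z k : K)‖ ≤ C := by
    intro k
    rw [hC]
    exact Finset.le_sup' (fun k => ‖σ₀ (z k : K)‖) (Finset.mem_univ k)
  set R := max (‖σ₀ (x : K)‖) (C / (b - 1)) with hR
  have hbpos : (0 : ℝ) < b := lt_trans one_pos hβ₀
  have hbnd : ∀ n, ‖σ₀ ((X n).1 : K)‖ ≤ R := by
    intro n
    induction n with
    | zero => exact le_max_left _ _
    | succ n ih =>
      have hrel' : σ₀ ((X n).1 : K) = σ₀ ((β : K)) * σ₀ ((X (n+1)).1 : K) + σ₀ ((z (κ n) : K)) := by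
        conv_lhs => rw [show ((X n).1 : K) = (β : K) * ((X (n+1)).1 : K) + ((z (κ n)) : K) by
          exact_mod_cast congrArg (fun c : NumberField.RingOfIntegers K => (c : K)) (hrel n)]
        rw [map_add, map_mul]
      have h1 : b * ‖σ₀ ((X (n+1)).1 : K)‖ ≤ R + C := by
        have : ‖σ₀ ((β:K)) * σ₀ ((X (n+1)).1 : K)‖ =
            ‖σ₀ ((X n).1 : K) - σ₀ ((z (κ n) : K))‖ := by
          rw [hrel']; ring_nf
        rw [← map_mul] at this
        have h2 : ‖σ₀ ((X n).1 : K) - σ₀ ((z (κ n) : K))‖ ≤ R + C := by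
          calc ‖σ₀ ((X n).1 : K) - σ₀ ((z (κ n) : K))‖
              ≤ ‖σ₀ ((X n).1 : K)‖ + ‖σ₀ ((z (κ n) : K))‖ := by
                simpa [sub_eq_add_neg] using norm_add_le (σ₀ ((X n).1 : K)) (-(σ₀ ((z (κ n) : K))))
            _ ≤ R + C := add_le_add ih (hC0 _)
        calc b * ‖σ₀ ((X (n+1)).1 : K)‖ = ‖σ₀ ((β:K)) * σ₀ ((X (n+1)).1 : K)‖ := by
              rw [norm_mul]
          _ ≤ R + C := by rw [← map_mul]; rw [map_mul] at this ⊢; rw [this] at *; exact h2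
      have hCR : C ≤ (b - 1) * R := by
        have h3 : C / (b - 1) ≤ R := le_max_right _ _
        have hb1 : (0:ℝ) < b - 1 := by linarith
        calc C = (b - 1) * (C / (b - 1)) := by field_simp
          _ ≤ (b - 1) * R := by
            exact mul_le_mul_of_nonneg_left h3 (le_of_lt hb1)
      have : b * ‖σ₀ ((X (n+1)).1 : K)‖ ≤ b * R := by nlinarith
      exact le_of_mul_le_mul_left this hbpos
  -- finiteness ⇒ bound on σ (X n)
  have hSfin : (Λ ∩ Metric.closedBall 0 R).Finite :=
    hdisc _ Metric.isBounded_closedBall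
  have hTfin : ((fun c : NumberField.RingOfIntegers K => σ₀ (c : K)) ⁻¹'
      (Λ ∩ Metric.closedBall 0 R)).Finite :=
    Set.Finite.preimage hinj.injOn hSfin
  have hXT : ∀ n, (X n).1 ∈ (fun c : NumberField.RingOfIntegers K => σ₀ (c : K)) ⁻¹'
      (Λ ∩ Metric.closedBall 0 R) := by
    intro n
    refine ⟨(X n).2, ?_⟩
    rw [Metric.mem_closedBall, Complex.dist_eq, sub_zero]
    exact hbnd n
  have himg : ((fun c : NumberField.RingOfIntegers K => ‖σ (c : K)‖) ''
      ((fun c : NumberField.RingOfIntegers K => σ₀ (c : K)) ⁻¹'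
        (Λ ∩ Metric.closedBall 0 R))).Finite := hTfin.image _
  obtain ⟨M, hM⟩ := himg.bddAbove
  have hMb : ∀ n, ‖σ ((X n).1 : K)‖ ≤ M := by
    intro n
    exact hM (Set.mem_image_of_mem _ (hXT n))
  -- main approximation
  set r := ‖σ (β : K)‖ with hr
  have hr0 : (0:ℝ) ≤ r := norm_nonneg _
  set D := M + ‖a‖ with hD
  have claim : ∀ n j, ∃ p ∈ A σ, ‖σ ((X j).1 : K) - p‖ ≤ r ^ n * D := by
    intro n
    induction n with
    | zero =>
      intro j
      refine ⟨a, ha, ?_⟩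
      rw [pow_zero, one_mul]
      calc ‖σ ((X j).1 : K) - a‖
          ≤ ‖σ ((X j).1 : K)‖ + ‖a‖ := by
            simpa [sub_eq_add_neg] using norm_add_le (σ ((X j).1 : K)) (-a)
        _ ≤ M + ‖a‖ := add_le_add (hMb j) le_rfl
    | succ n ih =>
      intro j
      obtain ⟨p, hp, hd⟩ := ih (j + 1)
      refine ⟨σ (β : K) * p + σ ((z (κ j)) : K), ?_, ?_⟩
      · rw [hAeq]
        exact Set.mem_iUnion.2 ⟨κ j, ⟨p, hp, rfl⟩⟩
      · have hrel' : σ ((X j).1 : K) = σ ((β : K)) * σ ((X (j+1)).1 : K) + σ ((z (κ j) : K)) := by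
          conv_lhs => rw [show ((X j).1 : K) = (β : K) * ((X (j+1)).1 : K) + ((z (κ j)) : K) by
            exact_mod_cast congrArg (fun c : NumberField.RingOfIntegers K => (c : K)) (hrel j)]
          rw [map_add, map_mul]
        have : σ ((X j).1 : K) - (σ (β : K) * p + σ ((z (κ j)) : K)) =
            σ (β : K) * (σ ((X (j+1)).1 : K) - p) := by
          rw [hrel']; ring
        rw [this, norm_mul]
        calc r * ‖σ ((X (j+1)).1 : K) - p‖ ≤ r * (r ^ n * D) :=
              mul_le_mul_of_nonneg_left hd hr0
          _ = r ^ (n + 1) * D := by ring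
  -- conclude
  have hxX : σ (x : K) = σ ((X 0).1 : K) := by rw [hX0]
  have htend : Filter.Tendsto (fun n => r ^ n * D) Filter.atTop (nhds 0) := by
    have := (tendsto_pow_atTop_nhds_zero_of_lt_one hr0 hσ).mul_const D
    simpa using this
  have hcl' : σ (x : K) ∈ closure (A σ) := by
    rw [Metric.mem_closure_iff]
    intro ε hε
    obtain ⟨n, hn⟩ := (htend.eventually (gt_mem_nhds hε)).exists
    obtain ⟨p, hp, hd⟩ := claim n 0
    refine ⟨p, hp, ?_⟩
    rw [Complex.dist_eq, hxX]
    exact lt_of_le_of_lt hd hn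
  rwa [hAcp.isClosed.closure_eq] at hcl'
end
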